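/- arXiv:2211.08494 — 5 statements merged into one kernel-verified Lean document; each statement's English description precedes it below -/
import Mathlib

section
/- Suppose a single judge with competence p_j > 1/2 assigns each expert e the weight w_{je} = log(p_{je}/(1 - p_{je})), where p_{je} = p_j·p_e + (1 - p_j)(1 - p_e) is the judge's perceived competence of the expert. Then: (i) for every expert e, w_{je} > 0 if p_e > 1/2, w_{je} < 0 if p_e < 1/2, and w_{je} = 0 if p_e = 1/2 (i.e. each weight has the same sign as the optimal weight log(p_e/(1 - p_e))); and (ii) for any two experts e, e', w_{je} > w_{je'} if and only if p_e > p_{e'} (i.e. the weights are in the correct order). -/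
private lemma logodds_lt {x y : ℝ} (hx : x ∈ Set.Ioo (0:ℝ) 1) (hy : y ∈ Set.Ioo (0:ℝ) 1) :
    Real.log (x / (1 - x)) < Real.log (y / (1 - y)) ↔ x < y := by
  obtain ⟨hx0, hx1⟩ := hx
  obtain ⟨hy0, hy1⟩ := hy
  have h1x : 0 < 1 - x := by linarith
  have h1y : 0 < 1 - y := by linarith
  rw [Real.log_lt_log_iff (by positivity) (by positivity),
    div_lt_div_iff₀ h1x h1y]
  constructor <;> intro h <;> nlinarith

/-- Minimal Competent Single Judge: A judge with competence
`pj > 1/2` who assigns each expert the log-odds weight of their perceived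
competence gives all experts weights with the correct sign and in the correct
order. -/
theorem minimal_competent_single_judge
    {E : Type*} (pj : ℝ) (hpj : pj ∈ Set.Ioo (0 : ℝ) 1) (hpj2 : 1 / 2 < pj)
    (pe : E → ℝ) (hpe : ∀ e, pe e ∈ Set.Ioo (0 : ℝ) 1)
    (pje : E → ℝ) (hpje : ∀ e, pje e = pj * pe e + (1 - pj) * (1 - pe e))
    (w : E → ℝ) (hw : ∀ e, w e = Real.log (pje e / (1 - pje e))) :
    (∀ e, (pe e > 1 / 2 → w e > 0) ∧ (pe e < 1 / 2 → w e < 0) ∧ (pe e = 1 / 2 → w e = 0)) ∧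
    (∀ e e', w e > w e' ↔ pe e > pe e') := by
  obtain ⟨hpj0, hpj1⟩ := hpj
  have hmem : ∀ e, pje e ∈ Set.Ioo (0:ℝ) 1 := by
    intro e
    obtain ⟨h0, h1⟩ := hpe e
    rw [hpje e]
    constructor <;> nlinarith
  have key : ∀ e e', w e < w e' ↔ pe e < pe e' := by
    intro e e'
    rw [hw e, hw e', logodds_lt (hmem e) (hmem e'), hpje e, hpje e']
    constructor <;> intro h <;> nlinarith
  have half : Real.log ((1:ℝ)/2 / (1 - 1/2)) = 0 := by norm_num
  constructor
  · intro e
    obtain ⟨h0, h1⟩ := hpe e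
    refine ⟨fun h => ?_, fun h => ?_, fun h => ?_⟩
    · rw [hw e, ← half, gt_iff_lt, logodds_lt (by norm_num) (hmem e), hpje e]; nlinarith
    · rw [hw e, ← half]
      rw [logodds_lt (hmem e) (by norm_num), hpje e]; nlinarith
    · rw [hw e, hpje e, h]
      have : pj * (1/2) + (1 - pj) * (1 - 1/2) = 1/2 := by ring
      rw [this]; norm_num
  · intro e e'
    exact key e' e
end

section
/- Let the ground truth be a uniformly random bit, and let two experts cast independent votes v_1, v_2 ∈ {0,1}, where expert i votes equal to the ground truth with probability p_i ∈ (0,1), independently given the truth. Then for any deterministic aggregation rule f : {0,1}×{0,1} → {0,1}, the probability that f(v_1, v_2) equals the ground truth is at most max(p_1, 1 - p_1, p_2, 1 - p_2). -/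
set_option maxHeartbeats 1000000


/-- The probability that a deterministic aggregation rule `f` on two experts'
votes matches a uniformly random binary ground truth, when expert `i` votes
correctly with probability `p i`, independently given the truth. Votes are
`Bool`s; in the first sum the truth is `true`, in the second it is `false`. -/
noncomputable def twoExpertAccuracy (p₁ p₂ : ℝ) (f : Bool → Bool → Bool) : ℝ :=
  (1 / 2) * ∑ a : Bool, ∑ b : Bool,
      (if a then p₁ else 1 - p₁) * (if b then p₂ else 1 - p₂) * (if f a b then 1 else 0)
  + (1 / 2) * ∑ a : Bool, ∑ b : Bool,
      (if a then 1 - p₁ else p₁) * (if b then 1 - p₂ else p₂) * (if f a b then 0 else 1)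

/-- With two experts, no deterministic aggregation rule has
accuracy exceeding `max (p₁, 1 - p₁, p₂, 1 - p₂)`. -/
theorem two_experts_accuracy_upper_bound
    (p₁ p₂ : ℝ) (hp₁ : p₁ ∈ Set.Ioo (0 : ℝ) 1) (hp₂ : p₂ ∈ Set.Ioo (0 : ℝ) 1)
    (f : Bool → Bool → Bool) :
    twoExpertAccuracy p₁ p₂ f ≤ max (max p₁ (1 - p₁)) (max p₂ (1 - p₂)) := by
  obtain ⟨h1, h2⟩ := hp₁
  obtain ⟨h3, h4⟩ := hp₂
  have hm1 : p₁ ≤ max (max p₁ (1 - p₁)) (max p₂ (1 - p₂)) := le_max_of_le_left (le_max_left _ _)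
  have hm2 : 1 - p₁ ≤ max (max p₁ (1 - p₁)) (max p₂ (1 - p₂)) := le_max_of_le_left (le_max_right _ _)
  have hm3 : p₂ ≤ max (max p₁ (1 - p₁)) (max p₂ (1 - p₂)) := le_max_of_le_right (le_max_left _ _)
  have hm4 : 1 - p₂ ≤ max (max p₁ (1 - p₁)) (max p₂ (1 - p₂)) := le_max_of_le_right (le_max_right _ _)
  have hm5 : (1 : ℝ) / 2 ≤ max (max p₁ (1 - p₁)) (max p₂ (1 - p₂)) := by
    rcases le_total p₁ (1 - p₁) with h | h
    · linarith [le_max_of_le_left (le_max_right p₁ (1 - p₁) :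
        (1 - p₁ : ℝ) ≤ max p₁ (1 - p₁)) (c := max p₂ (1 - p₂))]
    · linarith [le_max_of_le_left (le_max_left p₁ (1 - p₁) :
        (p₁ : ℝ) ≤ max p₁ (1 - p₁)) (c := max p₂ (1 - p₂))]
  unfold twoExpertAccuracy
  simp only [Fintype.sum_bool, if_true, if_false]
  cases h : f true true <;> cases h' : f true false <;> cases h'' : f false true <;>
    cases h''' : f false false <;>
    simp only [h, h', h'', h''', reduceIte, Bool.false_eq_true, if_true, if_false] <;>
    linarith [hm1, hm2, hm3, hm4, hm5]
end

section
/- Let the ground truth be a uniformly random bit, and let two experts cast independent votes v_1, v_2 ∈ {0,1}, where expert i votes equal to the ground truth with probability p_i ∈ (0,1). If p_1 ≥ p_2 and p_1 ≥ 1 - p_2, then the dictatorship rule f(v_1, v_2) = v_1 is optimal: its probability of matching the ground truth is p_1, and no deterministic aggregation rule f : {0,1}×{0,1} → {0,1} achieves probability of correctness greater than p_1. -/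
/-- If `p₁ ≥ p₂` and `p₁ ≥ 1 - p₂`, then making expert 1 a
dictator is optimal: its accuracy is `p₁` and no deterministic rule does
better. -/
theorem two_experts_dictator_optimal
    (p₁ p₂ : ℝ) (hp₁ : p₁ ∈ Set.Ioo (0 : ℝ) 1) (hp₂ : p₂ ∈ Set.Ioo (0 : ℝ) 1)
    (h₁ : p₁ ≥ p₂) (h₂ : p₁ ≥ 1 - p₂) :
    twoExpertAccuracy p₁ p₂ (fun a _ => a) = p₁ ∧
    ∀ f : Bool → Bool → Bool, twoExpertAccuracy p₁ p₂ f ≤ p₁ := by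
  constructor
  · simp [twoExpertAccuracy, Fintype.sum_bool]
    ring
  · intro f
    simp only [twoExpertAccuracy, Fintype.sum_bool]
    cases htt : f true true <;> cases htf : f true false <;>
      cases hft : f false true <;> cases hff : f false false <;>
      simp [htt, htf, hft, hff] <;> nlinarith [hp₁.1, hp₁.2, hp₂.1, hp₂.2]
end

section
/- Let the ground truth be a uniformly random bit, and let two experts cast independent votes v_1, v_2 ∈ {0,1}, where expert i votes equal to the ground truth with probability p_i ∈ (0,1). If p_2 ≤ p_1 ≤ 1/2, then the anti-dictatorship rule f(v_1, v_2) = 1 - v_2 is optimal: its probability of matching the ground truth is 1 - p_2, and no deterministic aggregation rule f : {0,1}×{0,1} → {0,1} achieves probability of correctness greater than 1 - p_2. -/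
/-- If `p₂ ≤ p₁ ≤ 1/2`, then making expert 2 an anti-dictator is
optimal: its accuracy is `1 - p₂` and no deterministic rule does better. -/
theorem two_experts_anti_dictator_optimal
    (p₁ p₂ : ℝ) (hp₁ : p₁ ∈ Set.Ioo (0 : ℝ) 1) (hp₂ : p₂ ∈ Set.Ioo (0 : ℝ) 1)
    (h₁ : p₂ ≤ p₁) (h₂ : p₁ ≤ 1 / 2) :
    twoExpertAccuracy p₁ p₂ (fun _ b => !b) = 1 - p₂ ∧
    ∀ f : Bool → Bool → Bool, twoExpertAccuracy p₁ p₂ f ≤ 1 - p₂ := by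
  obtain ⟨hp₁0, hp₁1⟩ := hp₁
  obtain ⟨hp₂0, hp₂1⟩ := hp₂
  constructor
  · simp [twoExpertAccuracy, Fintype.sum_bool]
    ring
  · intro f
    simp only [twoExpertAccuracy, Fintype.sum_bool]
    rcases hff : f false false <;> rcases hft : f false true <;>
      rcases htf : f true false <;> rcases htt : f true true <;>
      simp [hff, hft, htf, htt] <;> nlinarith
end

section
/- Fix ε > 0. For each m, let m experts cast independent votes v_1, …, v_m ∈ {0,1}, where expert e votes correctly (equals the ground truth) with probability p_e ≤ 1/2 - ε. Then the probability that a strict majority of the m votes is correct (i.e. that simple majority rule outputs the ground truth) tends to 0 as m → ∞. -/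
/-!
A Chernoff bound. For `t ≥ 1`, every majority coalition `S` of the `n` experts has
`t ^ n ≤ (t ^ 2) ^ #S`, so `t ^ n` times the majority probability is at most
`∑ S, (∏ i ∈ S, p i * t ^ 2) * ∏ i ∉ S, (1 - p i) = ∏ i, (p i * t ^ 2 + 1 - p i)`.
When `p i ≤ 1/2 - ε`, the choice `t = 1 / (1 - 2ε)` makes each factor at most `(1 - 2ε²) t`,
so the majority probability is at most `(1 - 2ε²) ^ n`.
-/

open Filter Finset

section Majority

variable {ι : Type*} [Fintype ι] [DecidableEq ι]

def majorityProb (q : ι → ℝ) : ℝ :=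
  ∑ S ∈ univ.filter (fun S : Finset ι => Fintype.card ι < 2 * S.card),
    (∏ i ∈ S, q i) * ∏ i ∈ Sᶜ, (1 - q i)

lemma coalition_prob_nonneg {q : ι → ℝ} (hq0 : ∀ i, 0 ≤ q i) (hq1 : ∀ i, q i ≤ 1)
    (S : Finset ι) : 0 ≤ (∏ i ∈ S, q i) * ∏ i ∈ Sᶜ, (1 - q i) :=
  mul_nonneg (prod_nonneg fun i _ => hq0 i) (prod_nonneg fun i _ => sub_nonneg.2 (hq1 i))

lemma majorityProb_nonneg {q : ι → ℝ} (hq0 : ∀ i, 0 ≤ q i) (hq1 : ∀ i, q i ≤ 1) :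
    0 ≤ majorityProb q :=
  sum_nonneg fun S _ => coalition_prob_nonneg hq0 hq1 S

lemma majorityProb_mul_pow_le {q : ι → ℝ} (hq0 : ∀ i, 0 ≤ q i) (hq1 : ∀ i, q i ≤ 1)
    {t : ℝ} (ht : 1 ≤ t) :
    majorityProb q * t ^ Fintype.card ι ≤ ∏ i, (q i * t ^ 2 + (1 - q i)) := by
  have hweight : ∀ S : Finset ι, 0 ≤ (∏ i ∈ S, q i * t ^ 2) * ∏ i ∈ Sᶜ, (1 - q i) := by
    intro S
    rw [prod_mul_distrib]
    exact mul_nonneg (mul_nonneg (prod_nonneg fun i _ => hq0 i) (by positivity))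
      (prod_nonneg fun i _ => sub_nonneg.2 (hq1 i))
  calc majorityProb q * t ^ Fintype.card ι
      = ∑ S ∈ univ.filter (fun S : Finset ι => Fintype.card ι < 2 * S.card),
          (∏ i ∈ S, q i) * (∏ i ∈ Sᶜ, (1 - q i)) * t ^ Fintype.card ι := sum_mul _ _ _
    _ ≤ ∑ S ∈ univ.filter (fun S : Finset ι => Fintype.card ι < 2 * S.card),
          (∏ i ∈ S, q i * t ^ 2) * ∏ i ∈ Sᶜ, (1 - q i) := by
        refine sum_le_sum fun S hS => ?_
        have hmaj : t ^ Fintype.card ι ≤ (t ^ 2) ^ S.card := by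
          rw [← pow_mul]
          exact pow_le_pow_right₀ ht (mem_filter.1 hS).2.le
        rw [prod_mul_distrib, prod_const, mul_right_comm]
        exact mul_le_mul_of_nonneg_right
          (mul_le_mul_of_nonneg_left hmaj (prod_nonneg fun i _ => hq0 i))
          (prod_nonneg fun i _ => sub_nonneg.2 (hq1 i))
    _ ≤ ∑ S, (∏ i ∈ S, q i * t ^ 2) * ∏ i ∈ Sᶜ, (1 - q i) :=
        sum_le_sum_of_subset_of_nonneg (filter_subset _ _) fun S _ _ => hweight S
    _ = ∏ i, (q i * t ^ 2 + (1 - q i)) := (Fintype.prod_add _ _).symm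

lemma mul_sq_add_one_sub_le_of_le_half_sub {ε q : ℝ} (hε0 : 0 ≤ ε) (hε : ε < 1 / 2)
    (hq : q ≤ 1 / 2 - ε) :
    q * (1 - 2 * ε)⁻¹ ^ 2 + (1 - q) ≤ (1 - 2 * ε ^ 2) * (1 - 2 * ε)⁻¹ := by
  have hpos : 0 < 1 - 2 * ε := by linarith
  have ht : 1 ≤ (1 - 2 * ε)⁻¹ ^ 2 := one_le_pow₀ ((one_le_inv₀ hpos).2 (by linarith))
  -- both sides are affine in `q`, the left one increasing, and they agree at `q = 1/2 - ε`
  have hedge : (1 / 2 - ε) * (1 - 2 * ε)⁻¹ ^ 2 + (1 - (1 / 2 - ε))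
      = (1 - 2 * ε ^ 2) * (1 - 2 * ε)⁻¹ := by
    field_simp
    ring
  nlinarith [mul_le_mul_of_nonneg_right hq (sub_nonneg.2 ht)]

theorem majorityProb_le_pow {ε : ℝ} (hε0 : 0 ≤ ε) (hε : ε < 1 / 2) {q : ι → ℝ}
    (hq0 : ∀ i, 0 ≤ q i) (hq : ∀ i, q i ≤ 1 / 2 - ε) :
    majorityProb q ≤ (1 - 2 * ε ^ 2) ^ Fintype.card ι := by
  have hq1 : ∀ i, q i ≤ 1 := fun i => by linarith [hq i]
  set t := (1 - 2 * ε)⁻¹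
  have ht : 1 ≤ t := (one_le_inv₀ (by linarith)).2 (by linarith)
  refine le_of_mul_le_mul_right ?_ (pow_pos (zero_lt_one.trans_le ht) (Fintype.card ι))
  calc majorityProb q * t ^ Fintype.card ι
      ≤ ∏ i, (q i * t ^ 2 + (1 - q i)) := majorityProb_mul_pow_le hq0 hq1 ht
    _ ≤ ∏ _i : ι, (1 - 2 * ε ^ 2) * t :=
        prod_le_prod (fun i _ => by nlinarith [hq0 i, hq1 i, sq_nonneg t])
          fun i _ => mul_sq_add_one_sub_le_of_le_half_sub hε0 hε (hq i)
    _ = (1 - 2 * ε ^ 2) ^ Fintype.card ι * t ^ Fintype.card ι := by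
        rw [prod_const, card_univ, mul_pow]

end Majority

/-- reverse Condorcet Jury Theorem: If for each `m` the `m`
experts vote independently and each expert's competence is at most `1/2 - ε`
(and above 0), then the probability that a strict majority of the votes is
correct — written as the sum over all majority coalitions `S` of the
probability that exactly the experts in `S` vote correctly — tends to `0` as
`m → ∞`. -/
theorem condorcet_jury_theorem_incompetent
    (ε : ℝ) (hε : 0 < ε)
    (p : ∀ m : ℕ, Fin m → ℝ)
    (hub : ∀ m (e : Fin m), p m e ≤ 1 / 2 - ε)
    (hlb : ∀ m (e : Fin m), 0 < p m e) :
    Tendsto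
      (fun m : ℕ =>
        ∑ S ∈ Finset.univ.powerset.filter (fun S : Finset (Fin m) => m < 2 * S.card),
          (∏ e ∈ S, p m e) * ∏ e ∈ Sᶜ, (1 - p m e))
      atTop (nhds 0) := by
  have hε2 : ε < 1 / 2 := by linarith [hlb 1 0, hub 1 0]
  have hp0 : ∀ m e, 0 ≤ p m e := fun m e => (hlb m e).le
  have hp1 : ∀ m e, p m e ≤ 1 := fun m e => by linarith [hub m e]
  have hprob : ∀ m : ℕ, ∑ S ∈ Finset.univ.powerset.filter
      (fun S : Finset (Fin m) => m < 2 * S.card), (∏ e ∈ S, p m e) * ∏ e ∈ Sᶜ, (1 - p m e)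
      = majorityProb (p m) := by
    intro m
    simp only [majorityProb, powerset_univ, Fintype.card_fin]
  simp only [hprob]
  refine squeeze_zero (fun m => majorityProb_nonneg (hp0 m) (hp1 m))
    (fun m => (majorityProb_le_pow hε.le hε2 (hp0 m) (hub m)).trans_eq
      (by rw [Fintype.card_fin])) ?_
  exact tendsto_pow_atTop_nhds_zero_of_lt_one (by nlinarith) (by nlinarith)
end
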